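/- Let α be a real number with α > −1. For n ≥ 1 define the quasi-Christoffel Laguerre polynomial L^{QC}_n(x) = L_n^{(α+1)}(x) + (n+α+1)·L_{n−1}^{(α+1)}(x). Then for every n ≥ 2, in ℝ[X]: L^{QC}_{n+1}(x) = (x − (2n+α+1))·L^{QC}_n(x) − (n−1)(n+α+1)·L^{QC}_{n−1}(x). -/
import Mathlib


open Polynomial

/-- The monic Laguerre polynomials `L_n^{(a)}`, defined by the three-term recurrence
`L_{n+1} = (X - (2n+a+1)) L_n - n(n+a) L_{n-1}` with `L_{-1} = 0`, `L_0 = 1`. -/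
noncomputable def laguerreP (a : ℝ) : ℕ → Polynomial ℝ
  | 0 => 1
  | 1 => X - Polynomial.C (a + 1)
  | n + 2 => (X - Polynomial.C (2 * ((n : ℝ) + 1) + a + 1)) * laguerreP a (n + 1)
      - Polynomial.C (((n : ℝ) + 1) * (((n : ℝ) + 1) + a)) * laguerreP a n

lemma laguerreP_rec (a : ℝ) (n : ℕ) :
    laguerreP a (n + 2) = (X - Polynomial.C (2 * ((n : ℝ) + 1) + a + 1)) * laguerreP a (n + 1)
      - Polynomial.C (((n : ℝ) + 1) * (((n : ℝ) + 1) + a)) * laguerreP a n := rfl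

/-- The quasi-Christoffel Laguerre polynomial of order one,
`L^{QC}_n(x;0) = L_n^{(α+1)} + (n+α+1) L_{n-1}^{(α+1)}`. -/
noncomputable def LQC (α : ℝ) (n : ℕ) : Polynomial ℝ :=
  laguerreP (α + 1) n + Polynomial.C ((n : ℝ) + α + 1) * laguerreP (α + 1) (n - 1)

/-- the quasi-Christoffel Laguerre polynomials satisfy the three-term
recurrence `L^{QC}_{n+1} = (x - (2n+α+1)) L^{QC}_n - (n-1)(n+α+1) L^{QC}_{n-1}`. -/
theorem quasiChristoffel_laguerre_ttrr
    (α : ℝ) (hα : -1 < α) :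
    ∀ n : ℕ, 2 ≤ n →
      LQC α (n + 1) =
        (X - Polynomial.C (2 * (n : ℝ) + α + 1)) * LQC α n
        - Polynomial.C (((n : ℝ) - 1) * ((n : ℝ) + α + 1)) * LQC α (n - 1) := by
  intro n hn
  obtain ⟨m, rfl⟩ : ∃ m, n = m + 2 := ⟨n - 2, by omega⟩
  have h1 : m + 2 + 1 = (m + 1) + 2 := by ring
  simp only [LQC, show m + 2 + 1 - 1 = m + 2 from rfl, show m + 2 - 1 = m + 1 from rfl,
    h1, laguerreP_rec]
  push_cast
  simp only [C_add, C_sub, C_mul, C_pow, C_1, map_ofNat]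
  ring
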